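/- arXiv:1708.05731 — 4 statements merged into one kernel-verified Lean document; each statement's English description precedes it below -/
import Mathlib

section
/- Let R be a (not necessarily commutative) ring with identity, and let e₁, e₂ ∈ R be orthogonal idempotents with e₁ + e₂ = 1. Let I be a two-sided ideal of R such that e₁Ie₁ and e₂Ie₂ are nil with nilpotency indices r₁ and r₂ respectively (i.e., any product of r₁ elements of e₁Ie₁ is zero, and similarly for e₂Ie₂). Then any product of r₁ + r₂ + 1 elements of I is zero; in particular I is nil. -/
/-!
Insert `1 = e₁ + e₂` after each of the `r₁ + r₂ + 1` factors `x₁ ⋯ xₙ` and expand: every resulting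
term is `x₁ e_{i₁} x₂ e_{i₂} ⋯ xₙ e_{iₙ}`, and by pigeonhole some `e = e₁` occurs at least `r₁ + 1`
times or `e = e₂` at least `r₂ + 1` times. Regrouping the factors between two consecutive occurrences
of `e` turns the term into `u (e y₁ e) ⋯ (e y_r e) v` with all `yⱼ ∈ I`, which vanishes.
The expansion is done one factor at a time, with the invariant that the current prefix `p`
annihilates every product `(z₁ e₁) ⋯ (z_{b₁} e₁)` and every `(z₁ e₂) ⋯ (z_{b₂} e₂)` with `zⱼ ∈ I`,
where `b₁ + b₂` exceeds the number of remaining factors by one.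
-/

namespace TwoSidedIdeal

variable {R : Type*} [Ring R] (I : TwoSidedIdeal R)

def KillsProducts (e : R) (b : ℕ) (p : R) : Prop :=
  ∀ m : List R, (∀ z ∈ m, z ∈ I) → m.length = b → p * (m.map (· * e)).prod = 0

variable {I}

lemma KillsProducts.eq_zero {e p : R} (h : I.KillsProducts e 0 p) : p = 0 := by
  simpa using h [] (by simp) rfl

lemma KillsProducts.mul_mul_self {e p x : R} {b : ℕ} (h : I.KillsProducts e (b + 1) p)
    (hx : x ∈ I) : I.KillsProducts e b (p * (x * e)) := by
  intro m hm hml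
  have := h (x :: m) (List.forall_mem_cons.mpr ⟨hx, hm⟩) (by simp [hml])
  simpa [mul_assoc] using this

lemma KillsProducts.mul_mul {e p x : R} {b : ℕ} (h : I.KillsProducts e b p) (hx : x ∈ I)
    (f : R) : I.KillsProducts e b (p * (x * f)) := by
  rintro (_ | ⟨z, m⟩) hm hml
  · obtain rfl : 0 = b := hml
    simp [h.eq_zero]
  · have hxfz : x * (f * z) ∈ I := I.mul_mem_right _ _ hx
    have := h (x * (f * z) :: m) (List.forall_mem_cons.mpr ⟨hxfz, (List.forall_mem_cons.mp hm).2⟩)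
      (by simpa using hml)
    simpa [mul_assoc] using this

lemma mul_prod_eq_zero_of_killsProducts {e₁ e₂ : R} (hsum : e₁ + e₂ = 1) :
    ∀ {l : List R} {b₁ b₂ : ℕ} {p : R}, I.KillsProducts e₁ b₁ p → I.KillsProducts e₂ b₂ p →
      (∀ x ∈ l, x ∈ I) → l.length + 1 = b₁ + b₂ → p * l.prod = 0
  | [], b₁, b₂, p, h₁, h₂, _, hlen => by
    obtain rfl | rfl : b₁ = 0 ∨ b₂ = 0 := by simp only [List.length_nil] at hlen; omega
    · simp [h₁.eq_zero]
    · simp [h₂.eq_zero]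
  | _ :: _, 0, _, _, h₁, _, _, _ => by simp [h₁.eq_zero]
  | _ :: _, _, 0, _, _, h₂, _, _ => by simp [h₂.eq_zero]
  | x :: l, b₁ + 1, b₂ + 1, p, h₁, h₂, hxl, hlen => by
    obtain ⟨hx, hl⟩ := List.forall_mem_cons.mp hxl
    simp only [List.length_cons] at hlen
    have t₁ : p * (x * e₁) * l.prod = 0 :=
      mul_prod_eq_zero_of_killsProducts hsum (h₁.mul_mul_self hx) (h₂.mul_mul hx e₁) hl (by omega)
    have t₂ : p * (x * e₂) * l.prod = 0 :=
      mul_prod_eq_zero_of_killsProducts hsum (h₁.mul_mul hx e₂) (h₂.mul_mul_self hx) hl (by omega)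
    calc p * (x :: l).prod = p * (x * (e₁ + e₂)) * l.prod := by
          rw [hsum, mul_one, List.prod_cons, mul_assoc]
      _ = p * (x * e₁) * l.prod + p * (x * e₂) * l.prod := by noncomm_ring
      _ = 0 := by rw [t₁, t₂, add_zero]

lemma _root_.IsIdempotentElem.mul_prod_map_mul {e : R} (he : IsIdempotentElem e) (zs : List R) :
    e * (zs.map (· * e)).prod = (zs.map (e * · * e)).prod * e := by
  induction zs with
  | nil => simp
  | cons z zs ih =>
    calc e * (z * e * (zs.map (· * e)).prod) = e * z * e * (e * (zs.map (· * e)).prod) := by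
          rw [← mul_assoc (e * z * e), mul_assoc (e * z), he.eq, mul_assoc, mul_assoc, mul_assoc]
      _ = _ := by simp only [ih, List.map_cons, List.prod_cons, mul_assoc]

lemma killsProducts_one {e : R} (he : IsIdempotentElem e) {r : ℕ}
    (hr : ∀ l : List R, (∀ y ∈ l, ∃ x ∈ I, y = e * x * e) → l.length = r → l.prod = 0) :
    I.KillsProducts e (r + 1) 1
  | [], _, hml => by simp at hml
  | z :: zs, hzs, hml => by
    have hcorner : (zs.map (e * · * e)).prod = 0 :=
      hr _ (by simpa using fun x hx => ⟨x, (List.forall_mem_cons.mp hzs).2 x hx, rfl⟩)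
        (by simpa using hml)
    calc 1 * ((z :: zs).map (· * e)).prod = z * (e * (zs.map (· * e)).prod) := by simp [mul_assoc]
      _ = 0 := by rw [he.mul_prod_map_mul, hcorner, zero_mul, mul_zero]

end TwoSidedIdeal

theorem stmt0_general {R : Type*} [Ring R] (e₁ e₂ : R)
    (he₁ : e₁ * e₁ = e₁) (he₂ : e₂ * e₂ = e₂)
    (hsum : e₁ + e₂ = 1)
    (I : TwoSidedIdeal R) (r₁ r₂ : ℕ)
    (hr₁ : ∀ l : List R, (∀ y ∈ l, ∃ x ∈ I, y = e₁ * x * e₁) → l.length = r₁ →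
      l.prod = 0)
    (hr₂ : ∀ l : List R, (∀ y ∈ l, ∃ x ∈ I, y = e₂ * x * e₂) → l.length = r₂ →
      l.prod = 0) :
    ∀ l : List R, (∀ x ∈ l, x ∈ I) → l.length = r₁ + r₂ + 1 → l.prod = 0 := by
  intro l hl hlen
  simpa using TwoSidedIdeal.mul_prod_eq_zero_of_killsProducts hsum
    (TwoSidedIdeal.killsProducts_one he₁ hr₁) (TwoSidedIdeal.killsProducts_one he₂ hr₂) hl
    (by omega)

/-- orthogonal idempotents e₁, e₂ with e₁ + e₂ = 1; if e₁Ie₁ and e₂Ie₂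
are nil of index r₁, r₂ (all products of rᵢ elements vanish), then every product of
r₁ + r₂ + 1 elements of the two-sided ideal I vanishes. -/
theorem stmt0 {R : Type*} [Ring R] (e₁ e₂ : R)
    (he₁ : e₁ * e₁ = e₁) (he₂ : e₂ * e₂ = e₂)
    (h12 : e₁ * e₂ = 0) (h21 : e₂ * e₁ = 0) (hsum : e₁ + e₂ = 1)
    (I : TwoSidedIdeal R) (r₁ r₂ : ℕ)
    (hr₁ : ∀ l : List R, (∀ y ∈ l, ∃ x ∈ I, y = e₁ * x * e₁) → l.length = r₁ →
      l.prod = 0)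
    (hr₂ : ∀ l : List R, (∀ y ∈ l, ∃ x ∈ I, y = e₂ * x * e₂) → l.length = r₂ →
      l.prod = 0) :
    ∀ l : List R, (∀ x ∈ l, x ∈ I) → l.length = r₁ + r₂ + 1 → l.prod = 0 :=
  stmt0_general e₁ e₂ he₁ he₂ hsum I r₁ r₂ hr₁ hr₂
end

section
/- Let R be a ring with identity and let e₁, …, eₙ be pairwise orthogonal idempotents summing to 1. Let I be a two-sided ideal of R such that for each i, the set eᵢIeᵢ has nilpotency index ≤ rᵢ (every product of rᵢ elements of eᵢIeᵢ is zero). Then every product of N elements of I is zero whenever N ≥ r₁ + r₂ + ⋯ + rₙ + n − 1. In particular, I is a nil ideal. -/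
/-!
Expanding every gap of `x₁ ⋯ x_N` with `1 = ∑ eᵢ` writes the product as the sum of the words
`e i₀ * x₁ * e i₁ * ⋯ * x_N * e i_N`. Such a word has `N + 1 > ∑ rᵢ` indices, so some `i` occurs
at least `rᵢ + 1` times. Cutting the word at these occurrences and doubling `eᵢ` there exhibits a
product of `rᵢ` elements of `eᵢ I eᵢ` inside it, since every stretch between two occurrences
contains an element of `I`; hence the word vanishes.
-/

theorem List.exists_lt_count_of_sum_lt_length {ι : Type*} [Fintype ι] [DecidableEq ι]
    (s : List ι) (r : ι → ℕ) (h : ∑ i, r i < s.length) : ∃ i, r i < s.count i := by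
  by_contra! hle
  have hcount : ∑ i, s.count i = s.length := by
    simpa using Multiset.sum_count_eq_card (s := Finset.univ) (m := (s : Multiset ι)) (by simp)
  have := Finset.sum_le_sum fun i (_ : i ∈ Finset.univ) => hle i
  omega

theorem IsIdempotentElem.mul_list_prod_mul_self {M : Type*} [Monoid M] {a : M}
    (ha : IsIdempotentElem a) {m : List M} (hm : ∀ y ∈ m, a * y = y) :
    a * (m.prod * a) = m.prod * a := by
  cases m with
  | nil => simpa using ha.eq
  | cons y m => rw [List.prod_cons, ← mul_assoc, ← mul_assoc, hm y List.mem_cons_self]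

section InterleavedProduct

variable {R ι : Type*} [Ring R] (e : ι → R)

-- `interleavedProd e [x₁, …, x_N] [i₀, …, i_N] = e i₀ * x₁ * e i₁ * ⋯ * x_N * e i_N`.
def interleavedProd : List R → List ι → R
  | _, [] => 0
  | [], i :: _ => e i
  | x :: l, i :: s => e i * x * interleavedProd l s

variable {e}

theorem sum_interleavedProd_ofFn [Fintype ι] (hsum : ∑ i, e i = 1) :
    ∀ l : List R, ∑ f : Fin (l.length + 1) → ι, interleavedProd e l (List.ofFn f) = l.prod
  | [] => by
      rw [List.prod_nil, ← hsum]
      exact Fintype.sum_equiv (Equiv.funUnique (Fin 1) ι) _ _ fun f => by simp [interleavedProd]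
  | x :: t => by
      calc ∑ f : Fin (t.length + 2) → ι, interleavedProd e (x :: t) (List.ofFn f)
          = ∑ p : ι × (Fin (t.length + 1) → ι),
              interleavedProd e (x :: t) (List.ofFn (Fin.cons p.1 p.2)) :=
            (Equiv.sum_comp (Fin.consEquiv fun _ => ι) _).symm
        _ = ∑ i, e i * x * ∑ g : Fin (t.length + 1) → ι, interleavedProd e t (List.ofFn g) := by
            simp [Fintype.sum_prod_type, List.ofFn_succ, interleavedProd, Finset.mul_sum]
        _ = (x :: t).prod := by
            rw [sum_interleavedProd_ofFn hsum t, ← Finset.sum_mul, ← Finset.sum_mul, hsum]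
            simp

variable [DecidableEq ι]

theorem exists_interleavedProd_eq_mul_corner_prod {i : ι} (he : IsIdempotentElem (e i))
    (I : TwoSidedIdeal R) :
    ∀ (l : List R) (s : List ι) (k : ℕ), (∀ x ∈ l, x ∈ I) → s.length = l.length + 1 →
      k < s.count i → ∃ (u w : R) (m : List R), (∀ y ∈ m, ∃ x ∈ I, y = e i * x * e i) ∧
        m.length = k ∧ interleavedProd e l s = u * m.prod * e i * w
  | [], [j], k, _, _, hk => by
      obtain ⟨rfl, rfl⟩ : j = i ∧ k = 0 := by
        by_cases hj : j = i <;> simp_all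
      exact ⟨1, 1, [], by simp, rfl, by simp [interleavedProd]⟩
  | x :: t, j :: s, k, hl, hs, hk => by
      have ht : ∀ y ∈ t, y ∈ I := fun y hy => hl y (.tail _ hy)
      have hs' : s.length = t.length + 1 := by simpa using hs
      rcases lt_or_ge k (s.count i) with hks | hks
      · obtain ⟨u, w, m, hm, rfl, heq⟩ :=
          exists_interleavedProd_eq_mul_corner_prod he I t s k ht hs' hks
        exact ⟨e j * x * u, w, m, hm, rfl, by simp [interleavedProd, heq, mul_assoc]⟩
      obtain ⟨rfl, hk⟩ : j = i ∧ s.count i = k := by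
        by_cases hj : j = i <;> simp_all <;> omega
      cases k with
      | zero => exact ⟨1, x * interleavedProd e t s, [], by simp, rfl,
          by simp [interleavedProd, mul_assoc]⟩
      | succ k =>
        obtain ⟨u, w, m, hm, rfl, heq⟩ :=
          exists_interleavedProd_eq_mul_corner_prod he I t s k ht hs' (by omega)
        have hcorner : ∀ y ∈ m, e j * y = y := by
          rintro y hy
          obtain ⟨z, -, rfl⟩ := hm y hy
          rw [← mul_assoc, ← mul_assoc, he.eq]
        refine ⟨1, w, (e j * (x * u) * e j) :: m, ?_, rfl, ?_⟩
        · rintro y (_ | ⟨_, hy⟩)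
          · exact ⟨x * u, I.mul_mem_right _ _ (hl x List.mem_cons_self), rfl⟩
          · exact hm y hy
        · calc interleavedProd e (x :: t) (j :: s)
                = e j * (x * u) * (e j * (m.prod * e j)) * w := by
                  rw [he.mul_list_prod_mul_self hcorner]
                  simp [interleavedProd, heq, mul_assoc]
            _ = 1 * (e j * (x * u) * e j :: m).prod * e j * w := by simp [mul_assoc]

theorem interleavedProd_eq_zero {i : ι} (he : IsIdempotentElem (e i)) (I : TwoSidedIdeal R)
    {r : ℕ} (hr : ∀ m : List R, (∀ y ∈ m, ∃ x ∈ I, y = e i * x * e i) → m.length = r → m.prod = 0)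
    {l : List R} {s : List ι} (hl : ∀ x ∈ l, x ∈ I) (hs : s.length = l.length + 1)
    (hrs : r < s.count i) : interleavedProd e l s = 0 := by
  obtain ⟨u, w, m, hm, rfl, heq⟩ :=
    exists_interleavedProd_eq_mul_corner_prod he I l s r hl hs hrs
  rw [heq, hr m hm rfl, mul_zero, zero_mul, zero_mul]

end InterleavedProduct

theorem stmt1_general {R : Type*} [Ring R] (n : ℕ) (e : Fin n → R)
    (hidem : ∀ i, e i * e i = e i)
    (hsum : ∑ i, e i = 1)
    (I : TwoSidedIdeal R) (r : Fin n → ℕ)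
    (hr : ∀ i, ∀ l : List R, (∀ y ∈ l, ∃ x ∈ I, y = e i * x * e i) →
      l.length = r i → l.prod = 0) :
    ∀ N : ℕ, (∑ i, r i) + n - 1 ≤ N →
      ∀ l : List R, (∀ x ∈ l, x ∈ I) → l.length = N → l.prod = 0 := by
  rintro N hN l hl rfl
  rw [← sum_interleavedProd_ofFn hsum l]
  refine Finset.sum_eq_zero fun f _ => ?_
  have hn : 0 < n := (f 0).pos
  obtain ⟨i, hi⟩ :=
    (List.ofFn f).exists_lt_count_of_sum_lt_length r (by rw [List.length_ofFn]; omega)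
  exact interleavedProd_eq_zero (hidem i) I (hr i) hl List.length_ofFn hi

/-- pairwise orthogonal idempotents e₁,…,eₙ summing to 1; if each
eᵢIeᵢ has nilpotency index ≤ rᵢ, then every product of N elements of the
two-sided ideal I vanishes whenever N ≥ r₁ + ⋯ + rₙ + n − 1. -/
theorem stmt1 {R : Type*} [Ring R] (n : ℕ) (e : Fin n → R)
    (hidem : ∀ i, e i * e i = e i)
    (horth : ∀ i j, i ≠ j → e i * e j = 0)
    (hsum : ∑ i, e i = 1)
    (I : TwoSidedIdeal R) (r : Fin n → ℕ)
    (hr : ∀ i, ∀ l : List R, (∀ y ∈ l, ∃ x ∈ I, y = e i * x * e i) →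
      l.length = r i → l.prod = 0) :
    ∀ N : ℕ, (∑ i, r i) + n - 1 ≤ N →
      ∀ l : List R, (∀ x ∈ l, x ∈ I) → l.length = N → l.prod = 0 :=
  stmt1_general n e hidem hsum I r hr
end

section
/- Let C be an additive (preadditive with biproducts) category, let C₁, C₂ be objects with biproduct C = C₁ ⊕ C₂, with inclusions ι₁, ι₂ and projections ν₁, ν₂. Let I be a two-sided ideal of the endomorphism ring End(C) such that for each i ∈ {1,2}, every product of rᵢ endomorphisms of Cᵢ of the form νᵢ ∘ f ∘ ιᵢ with f ∈ I equals zero. Then fᴺ = 0 for every f ∈ I whenever N ≥ r₁ + r₂ + 1. -/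
/-!
Write `e₁ = ι₁ν₁`, `e₂ = ι₂ν₂`, so that `f = f e₁ + f e₂`. For `f ∈ I` every product
`z₁ (f e₁) z₂ (f e₁) ⋯ z_{r₁+1} (f e₁)` equals `z₁ f ι₁ · (ν₁ z₂ f ι₁) ⋯ (ν₁ z_{r₁+1} f ι₁) · ν₁`,
which contains `r₁` corner elements `ν₁ (z f) ι₁` with `z f ∈ I` and therefore vanishes; likewise
for `f e₂` and `r₂`. In the expansion of `(f e₁ + f e₂)^(r₁+r₂+1)` every word contains `r₁ + 1`
factors `f e₁` or `r₂ + 1` factors `f e₂`, so it vanishes.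
-/

open CategoryTheory CategoryTheory.Limits

section Ring

variable {R : Type*} [Ring R]

/-- `AnnihilatesSandwiches a k x` says that `x * z₁ * a * z₂ * a * ⋯ * z_k * a = 0` for all
`z₁, …, z_k`. -/
def AnnihilatesSandwiches (a : R) : ℕ → R → Prop
  | 0, x => x = 0
  | k + 1, x => ∀ z, AnnihilatesSandwiches a k (x * z * a)

namespace AnnihilatesSandwiches

variable {a : R}

theorem eq_zero {x : R} (h : AnnihilatesSandwiches a 0 x) : x = 0 := h

theorem mul_right {k : ℕ} {x : R} (h : AnnihilatesSandwiches a k x) (y : R) :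
    AnnihilatesSandwiches a k (x * y) := by
  cases k with
  | zero => rw [h.eq_zero, zero_mul]; rfl
  | succ k => exact fun z => by simpa only [mul_assoc] using h (y * z)

theorem mul_self {k : ℕ} {x : R} (h : AnnihilatesSandwiches a (k + 1) x) :
    AnnihilatesSandwiches a k (x * a) := by
  simpa only [mul_one] using h 1

theorem mul_add_pow_eq_zero {b : R} {m n : ℕ} {x : R} (ha : AnnihilatesSandwiches a (m + 1) x)
    (hb : AnnihilatesSandwiches b (n + 1) x) : x * (a + b) ^ (m + n + 1) = 0 := by
  have hxa : x * a * (a + b) ^ (m + n) = 0 := by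
    cases m with
    | zero => rw [ha.mul_self.eq_zero, zero_mul]
    | succ m =>
      rw [show m + 1 + n = m + n + 1 by omega]
      exact mul_add_pow_eq_zero ha.mul_self (hb.mul_right a)
  have hxb : x * b * (a + b) ^ (m + n) = 0 := by
    cases n with
    | zero => rw [hb.mul_self.eq_zero, zero_mul]
    | succ n =>
      rw [show m + (n + 1) = m + n + 1 by omega]
      exact mul_add_pow_eq_zero (ha.mul_right b) hb.mul_self
  rw [pow_succ', ← mul_assoc, mul_add, add_mul, hxa, hxb, add_zero]
termination_by m + n

end AnnihilatesSandwiches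

end Ring

section Corner

variable {C : Type*} [Category C] [Preadditive C] {X Y : C}

theorem annihilatesSandwiches_of_corner_prod_eq_zero (i : Y ⟶ X) (p : X ⟶ Y) (I : TwoSidedIdeal (End X))
    (r : ℕ) (hr : ∀ l : List (End Y), (∀ g ∈ l, ∃ f ∈ I, g = i ≫ f ≫ p) → l.length = r →
      l.prod = 0)
    {f : End X} (hf : f ∈ I) : AnnihilatesSandwiches (R := End X) (p ≫ i ≫ f) (r + 1) 1 := by
  -- `p ≫ l.prod ≫ i ≫ y` is `y ι (∏ l) ν`: a sandwich whose corner factors are collected in `l`.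
  suffices key : ∀ k (l : List (End Y)), (∀ g ∈ l, ∃ f ∈ I, g = i ≫ f ≫ p) →
      l.length + k = r → ∀ y : X ⟶ X,
        AnnihilatesSandwiches (R := End X) (p ≫ i ≫ f) k (p ≫ l.prod ≫ i ≫ y) by
    intro z
    simpa [End.mul_def] using key r [] (by simp) (by simp) (f ≫ z)
  intro k
  induction k with
  | zero =>
    intro l hl hlen y
    rw [hr l hl hlen]
    simp [AnnihilatesSandwiches]
  | succ k ih =>
    intro l hl hlen y z
    have hl' : ∀ g ∈ l ++ ([i ≫ f ≫ z ≫ p] : List (End Y)),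
        ∃ f ∈ I, g = i ≫ f ≫ p := by
      intro g hg
      rcases List.mem_append.mp hg with hg | hg
      · exact hl g hg
      · exact ⟨f ≫ z, I.mul_mem_left z f hf, by simpa using hg⟩
    simpa [List.prod_append, End.mul_def] using
      ih (l ++ ([i ≫ f ≫ z ≫ p] : List (End Y))) hl' (by simp; omega) y

end Corner

/-- in an additive category with biproduct C = C₁ ⊞ C₂, if I is a
two-sided ideal of End(C₁ ⊞ C₂) such that every product of rᵢ endomorphisms of Cᵢ
of the form νᵢ ∘ f ∘ ιᵢ (f ∈ I) vanishes, then fᴺ = 0 for every f ∈ I and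
every N ≥ r₁ + r₂ + 1. -/
theorem stmt2 {C : Type*} [Category C] [Preadditive C] [HasBinaryBiproducts C]
    (C₁ C₂ : C) (I : TwoSidedIdeal (End (C₁ ⊞ C₂))) (r₁ r₂ : ℕ)
    (hr₁ : ∀ l : List (End C₁),
      (∀ g ∈ l, ∃ f ∈ I, g = biprod.inl ≫ f ≫ biprod.fst) →
      l.length = r₁ → l.prod = 0)
    (hr₂ : ∀ l : List (End C₂),
      (∀ g ∈ l, ∃ f ∈ I, g = biprod.inr ≫ f ≫ biprod.snd) →
      l.length = r₂ → l.prod = 0) :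
    ∀ f ∈ I, ∀ N : ℕ, r₁ + r₂ + 1 ≤ N → f ^ N = 0 := by
  intro f hf N hN
  obtain ⟨k, rfl⟩ := Nat.exists_eq_add_of_le hN
  have hsplit : f = biprod.fst ≫ biprod.inl ≫ f + biprod.snd ≫ biprod.inr ≫ f := by
    rw [← Category.assoc, ← Category.assoc, ← Preadditive.add_comp, biprod.total,
      Category.id_comp]
  have h₁ := annihilatesSandwiches_of_corner_prod_eq_zero _ _ I r₁ hr₁ hf
  have h₂ := annihilatesSandwiches_of_corner_prod_eq_zero _ _ I r₂ hr₂ hf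
  have hpow : f ^ (r₁ + r₂ + 1) = 0 := by
    rw [hsplit]
    simpa only [one_mul] using h₁.mul_add_pow_eq_zero h₂
  rw [pow_add, hpow, zero_mul]
end

section
/- Let R be a ring with identity, e₁,…,eₙ pairwise orthogonal idempotents summing to 1, and suppose x ∈ R satisfies: eᵢ x eᵢ is nilpotent for each i and eᵢ x eⱼ = 0 whenever i > j (x is strictly 'upper triangular' modulo nilpotent diagonal). Then x is nilpotent. -/
/-- If `z * y = 0` and both are nilpotent, then `y + z` is nilpotent. -/
theorem aux_add_stmt4 {R : Type*} [Ring R] {y z : R} (h : z * y = 0)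
    (hy : IsNilpotent y) (hz : IsNilpotent z) : IsNilpotent (y + z) := by
  obtain ⟨p, hp⟩ := hy
  obtain ⟨q, hq⟩ := hz
  have key : ∀ N : ℕ, (y + z) ^ N = ∑ i ∈ Finset.range (N + 1), y ^ i * z ^ (N - i) := by
    intro N
    induction N with
    | zero => simp
    | succ N ih =>
      rw [pow_succ, ih, Finset.sum_mul, Finset.sum_range_succ]
      have h1 : ∀ i ∈ Finset.range N, y ^ i * z ^ (N - i) * (y + z) = y ^ i * z ^ (N + 1 - i) := by
        intro i hi
        rw [Finset.mem_range] at hi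
        have hz0 : z ^ (N - i) * y = 0 := by
          have hNi : N - i = (N - i - 1) + 1 := by omega
          rw [hNi, pow_succ, mul_assoc, h, mul_zero]
        rw [mul_add, mul_assoc, hz0, mul_zero, zero_add, mul_assoc, ← pow_succ]
        congr 2
        omega
      rw [Finset.sum_congr rfl h1]
      rw [Finset.sum_range_succ (n := N + 1), Finset.sum_range_succ (n := N)]
      simp [mul_add, pow_succ, add_assoc]
      abel
  refine ⟨p + q, ?_⟩
  rw [key]
  apply Finset.sum_eq_zero
  intro i hi
  rcases le_or_gt p i with hpi | hpi
  · have : y ^ i = 0 := by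
      have : y ^ i = y ^ p * y ^ (i - p) := by rw [← pow_add]; congr 1; omega
      rw [this, hp, zero_mul]
    rw [this, zero_mul]
  · have : z ^ (p + q - i) = 0 := by
      have h2 : z ^ (p + q - i) = z ^ q * z ^ (p + q - i - q) := by rw [← pow_add]; congr 1; omega
      rw [h2, hq, zero_mul]
    rw [this, mul_zero]

theorem aux_corner_stmt4 {R : Type*} [Ring R] : ∀ (n : ℕ) (e : Fin n → R),
    (∀ i, e i * e i = e i) → (∀ i j, i ≠ j → e i * e j = 0) →
    ∀ x : R, (∀ i j, j < i → e i * x * e j = 0) → (∀ i, IsNilpotent (e i * x * e i)) →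
    IsNilpotent ((∑ i, e i) * x * (∑ i, e i)) := by
  intro n
  induction n with
  | zero =>
    intro e _ _ x _ _
    simp
  | succ n ih =>
    intro e hidem horth x htri hdiag
    set f := e 0 with hf
    set E := ∑ i : Fin n, e i.succ with hE
    have hsum : (∑ i : Fin (n + 1), e i) = f + E := by rw [Fin.sum_univ_succ]
    have hfE : f * E = 0 := by
      rw [hE, Finset.mul_sum]
      apply Finset.sum_eq_zero
      intro i _
      exact horth 0 i.succ (Fin.succ_ne_zero i).symm
    have hEf : E * f = 0 := by
      rw [hE, Finset.sum_mul]
      apply Finset.sum_eq_zero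
      intro i _
      exact horth i.succ 0 (Fin.succ_ne_zero i)
    have hExf : E * x * f = 0 := by
      rw [hE, Finset.sum_mul, Finset.sum_mul]
      apply Finset.sum_eq_zero
      intro i _
      exact htri i.succ 0 (Fin.succ_pos i)
    have hc : IsNilpotent (E * x * E) := by
      rw [hE]
      exact ih (fun i => e i.succ) (fun i => hidem _)
        (fun i j hij => horth _ _ (fun hcon => hij (Fin.succ_injective n hcon)))
        x (fun i j hji => htri i.succ j.succ (Fin.succ_lt_succ_iff.mpr hji))
        (fun i => hdiag i.succ)
    have ha : IsNilpotent (f * x * f) := hdiag 0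
    have hb : IsNilpotent (f * x * E) := by
      refine ⟨2, ?_⟩
      have : f * x * E * (f * x * E) = f * x * (E * f) * x * E := by noncomm_ring
      rw [pow_two, this, hEf, mul_zero, zero_mul, zero_mul]
    have hba : (f * x * E) * (f * x * f) = 0 := by
      have : f * x * E * (f * x * f) = f * x * (E * f) * x * f := by noncomm_ring
      rw [this, hEf, mul_zero, zero_mul, zero_mul]
    have hy : IsNilpotent (f * x * f + f * x * E) := aux_add_stmt4 hba ha hb
    have hcy : (E * x * E) * (f * x * f + f * x * E) = 0 := by
      have h1 : E * x * E * (f * x * f) = E * x * (E * f) * x * f := by noncomm_ring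
      have h2 : E * x * E * (f * x * E) = E * x * (E * f) * x * E := by noncomm_ring
      rw [mul_add, h1, h2, hEf]
      simp
    have hfin : IsNilpotent ((f * x * f + f * x * E) + E * x * E) := aux_add_stmt4 hcy hy hc
    have heq : (∑ i : Fin (n + 1), e i) * x * (∑ i : Fin (n + 1), e i)
        = (f * x * f + f * x * E) + E * x * E := by
      rw [hsum]
      have : (f + E) * x * (f + E)
          = f * x * f + f * x * E + (E * x * f + E * x * E) := by noncomm_ring
      rw [this, hExf, zero_add]
    rwa [heq]

/-- pairwise orthogonal idempotents summing to 1; if x is block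
upper-triangular (eᵢ x eⱼ = 0 for i > j) with nilpotent diagonal blocks, then x
is nilpotent. -/
theorem stmt4 {R : Type*} [Ring R] (n : ℕ) (e : Fin n → R)
    (hidem : ∀ i, e i * e i = e i)
    (horth : ∀ i j, i ≠ j → e i * e j = 0)
    (hsum : ∑ i, e i = 1)
    (x : R)
    (htri : ∀ i j, j < i → e i * x * e j = 0)
    (hdiag : ∀ i, IsNilpotent (e i * x * e i)) :
    IsNilpotent x := by
  have h := aux_corner_stmt4 n e hidem horth x htri hdiag
  rwa [hsum, one_mul, mul_one] at h
end
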